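/- The n-queens program NQUEENS is correct w.r.t. the specification S = S_pq ∪ S_pqs: its least Herbrand model is contained in S. -/

import Mathlib

/-- Ground terms of the Herbrand universe: numerals built from `zero`/`succ`,
list constructors `cons`/`nil`, and infinitely many other constants `sym n`. -/
inductive Term : Type
  | zero : Term
  | succ : Term → Term
  | cons : Term → Term → Term
  | nil  : Term
  | sym  : ℕ → Term
deriving DecidableEq

/-- The numeral `sⁱ(0)` representing a natural number. -/
def num : ℕ → Term
  | 0 => Term.zero
  | n + 1 => Term.succ (num n)

/-- `NthMember k e t` : `e` is the `k`-th member (k ≥ 1) of the term `t`,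
i.e. `t = [e₁,…,e_{k-1}, e | t']`. -/
def NthMember : ℕ → Term → Term → Prop
  | 0, _, _ => False
  | 1, e, t => ∃ r, t = Term.cons e r
  | k + 2, e, t => ∃ h r, t = Term.cons h r ∧ NthMember (k + 1) e r

/-- `e` is a member of the term `t`. -/
def IsMember (e t : Term) : Prop := ∃ k, NthMember k e t

/-- `t` is a (proper, nil-terminated) list. -/
inductive IsList : Term → Prop
  | nil : IsList Term.nil
  | cons (h t : Term) : IsList t → IsList (Term.cons h t)

/-- The members of `cs` are pairwise distinct (no member occurs at two positions). -/
def DistinctMembers (cs : Term) : Prop :=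
  ∀ k1 k2 e, NthMember k1 e cs → NthMember k2 e cs → k1 = k2

/-- `(cs,us,ds)` represents a correct placement of queens `1,…,m`
in the context of row `i` (Definition 3 of the paper):
`cs` is a list of distinct members containing `1,…,m`; the up diagonal
numbers `k+j-i` and down diagonal numbers `k+i-j` of the queens `1,…,m`
(queen `j` being the `k`-th member of `cs`) are pairwise distinct; and every
positive such diagonal number `l` of queen `j` is reflected by `j` being the
`l`-th member of `us` (resp. `ds`). -/
def CorrectUpTo (m i : ℕ) (cs us ds : Term) : Prop :=
  m ≤ i ∧
  IsList cs ∧ DistinctMembers cs ∧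
  (∀ j, 1 ≤ j → j ≤ m → IsMember (num j) cs) ∧
  (∀ j1 j2 k1 k2, 1 ≤ j1 → j1 ≤ m → 1 ≤ j2 → j2 ≤ m →
     NthMember k1 (num j1) cs → NthMember k2 (num j2) cs →
     (k1 + j1 : ℤ) - i = (k2 + j2 : ℤ) - i → j1 = j2) ∧
  (∀ j1 j2 k1 k2, 1 ≤ j1 → j1 ≤ m → 1 ≤ j2 → j2 ≤ m →
     NthMember k1 (num j1) cs → NthMember k2 (num j2) cs →
     (k1 + i : ℤ) - j1 = (k2 + i : ℤ) - j2 → j1 = j2) ∧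
  (∀ j k (l : ℤ), 1 ≤ j → j ≤ m → NthMember k (num j) cs →
     (k + j : ℤ) - i = l → 0 < l → NthMember l.toNat (num j) us) ∧
  (∀ j k (l : ℤ), 1 ≤ j → j ≤ m → NthMember k (num j) cs →
     (k + i : ℤ) - j = l → 0 < l → NthMember l.toNat (num j) ds)

/-- Ground atoms of the n-queens program. -/
inductive Atom : Type
  | pq  (i cs us ds : Term)
  | pqs (i cs us ds : Term)
deriving DecidableEq

/-- A ground clause: a head together with the list of body atoms. -/
abbrev Clause := Atom × List Atom

/-- A (ground instantiation of a) definite program. -/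
abbrev Program := Set Clause

/-- `S` is an Herbrand model of `P`. -/
def IsModel (S : Set Atom) (P : Program) : Prop :=
  ∀ c ∈ P, (∀ b ∈ c.2, b ∈ S) → c.1 ∈ S

/-- The least Herbrand model of `P`. -/
def LHM (P : Program) : Set Atom := ⋂₀ {S | IsModel S P}

/-- A ground atom `A` is covered by program `P` w.r.t. specification `S`. -/
def Covered (P : Program) (S : Set Atom) (A : Atom) : Prop :=
  ∃ c ∈ P, c.1 = A ∧ ∀ b ∈ c.2, b ∈ S

/-- The set of ground instances of the two pq clauses:
`pq(I,[I|_],[I|_],[I|_])` and `pq(I,[_|Cs],[_|Us],[_|Ds]) ← pq(I,Cs,Us,Ds)`. -/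
def PQprog : Program :=
  {c | (∃ i x y z, c = (Atom.pq i (Term.cons i x) (Term.cons i y) (Term.cons i z), [])) ∨
       (∃ i c' cs u us d ds,
          c = (Atom.pq i (Term.cons c' cs) (Term.cons u us) (Term.cons d ds),
               [Atom.pq i cs us ds]))}

/-- The set of ground instances of the four clauses of NQUEENS. -/
def NQprog : Program :=
  {c | (∃ x y z, c = (Atom.pqs Term.zero x y z, [])) ∨
       (∃ i cs us u d ds,
          c = (Atom.pqs (Term.succ i) cs us (Term.cons d ds),
               [Atom.pqs i cs (Term.cons u us) ds, Atom.pq (Term.succ i) cs us ds])) ∨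
       (∃ i x y z, c = (Atom.pq i (Term.cons i x) (Term.cons i y) (Term.cons i z), [])) ∨
       (∃ i c' cs u us d ds,
          c = (Atom.pq i (Term.cons c' cs) (Term.cons u us) (Term.cons d ds),
               [Atom.pq i cs us ds]))}

/-- The specification `S_pq`. -/
def Spq : Set Atom :=
  {a | ∃ i cs us ds k, a = Atom.pq i cs us ds ∧ 0 < k ∧
       NthMember k i cs ∧ NthMember k i us ∧ NthMember k i ds}

/-- The correctness specification `S_pqs`. -/
def Spqs : Set Atom :=
  {a | (∃ cs us ds, a = Atom.pqs Term.zero cs us ds) ∨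
       (∃ i cs us t ds, 0 < i ∧ a = Atom.pqs (num i) cs us (Term.cons t ds) ∧
          (∀ j, 1 ≤ j → j ≤ i → IsMember (num j) cs) ∧
          (IsList cs → DistinctMembers cs → CorrectUpTo i i cs us ds))}

/-- The completeness specification `S⁰_pqs`. -/
def S0pqs : Set Atom :=
  {a | ∃ i cs us t ds, 0 < i ∧ a = Atom.pqs (num i) cs us (Term.cons t ds) ∧
        CorrectUpTo i i cs us ds}

/-- All atoms `pqs(0,cs,us,ds)`. -/
def SpqsZero : Set Atom :=
  {a | ∃ cs us ds, a = Atom.pqs Term.zero cs us ds}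

/-- The level mapping on ground terms: `|[h|t]| = 1+|t|`, `|s(t)| = 1+|t|`,
`|f(…)| = 0` otherwise. -/
def tlvl : Term → ℕ
  | Term.cons _ t => 1 + tlvl t
  | Term.succ t => 1 + tlvl t
  | _ => 0

/-- The level mapping on ground atoms. -/
def alvl : Atom → ℕ
  | Atom.pqs i cs _ _ => tlvl i + tlvl cs
  | Atom.pq _ cs _ _ => tlvl cs

/-- `t` is a list of length `n`. -/
inductive IsListLen : Term → ℕ → Prop
  | nil : IsListLen Term.nil 0
  | cons (h t : Term) (n : ℕ) : IsListLen t n → IsListLen (Term.cons h t) (n + 1)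

/-! The specification `S = S_pq ∪ S_pqs` is itself an Herbrand model of NQUEENS, so it contains the
least one. The only clause that needs thought is `pqs(s(I),…) ← pqs(I,Cs,[_|Us],Ds), pq(s(I),Cs,Us,Ds)`:
passing from row `m` to row `m+1` shifts every up-diagonal number down by one (so `[_|Us]` becomes
`Us`) and every down-diagonal number up by one (so `Ds` becomes `[_|Ds]`), while the `pq` atom puts
queen `m+1` at the same position `k₀` of `Cs`, `Us` and `[_|Ds]`. A clash of queen `m+1` with an
earlier queen on a diagonal would make two different numerals the same member of `[_|Us]` or of
`[_|Ds]`. -/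

theorem num_injective : Function.Injective num := by
  intro a b h
  induction a generalizing b with
  | zero => cases b <;> simp_all [num]
  | succ a ih =>
    cases b with
    | zero => simp [num] at h
    | succ b => exact congrArg (· + 1) (ih (Term.succ.inj h))

namespace NthMember

variable {k : ℕ} {e e' t : Term}

theorem pos (h : NthMember k e t) : 0 < k := by
  cases k with
  | zero => exact h.elim
  | succ n => exact n.succ_pos

theorem unique : NthMember k e t → NthMember k e' t → e = e' := by
  induction k using Nat.twoStepInduction generalizing t with
  | zero => exact False.elim
  | one =>
    rintro ⟨r, rfl⟩ ⟨r', h⟩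
    exact (Term.cons.inj h).1
  | more k _ ih =>
    rintro ⟨h, r, rfl, hm⟩ ⟨h', r', heq, hm'⟩
    obtain ⟨-, rfl⟩ := Term.cons.inj heq
    exact ih hm hm'

theorem exists_eq_cons (h : NthMember k e t) : ∃ x r, t = Term.cons x r := by
  match k, h with
  | 1, ⟨r, hr⟩ => exact ⟨e, r, hr⟩
  | _ + 2, ⟨x, r, hr, _⟩ => exact ⟨x, r, hr⟩

end NthMember

theorem nthMember_cons_iff {k : ℕ} {e x t : Term} (hk : 0 < k) :
    NthMember (k + 1) e (Term.cons x t) ↔ NthMember k e t := by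
  obtain ⟨n, rfl⟩ := Nat.exists_eq_add_of_lt hk
  constructor
  · rintro ⟨x', r, heq, hm⟩
    obtain ⟨-, rfl⟩ := Term.cons.inj heq
    exact hm
  · exact fun hm => ⟨x, t, rfl, hm⟩

theorem NthMember.cons {k : ℕ} {e t : Term} (x : Term) (h : NthMember k e t) :
    NthMember (k + 1) e (Term.cons x t) :=
  (nthMember_cons_iff h.pos).2 h

namespace CorrectUpTo

theorem zero {cs us ds : Term} (hL : IsList cs) (hD : DistinctMembers cs) :
    CorrectUpTo 0 0 cs us ds := by
  refine ⟨le_rfl, hL, hD, ?_, ?_, ?_, ?_, ?_⟩ <;> intros <;> omega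

variable {m k₀ : ℕ} {cs u us t ds : Term}

theorem not_up_collision (hold : CorrectUpTo m m cs (Term.cons u us) ds)
    (hu : NthMember k₀ (num (m + 1)) us) {j k : ℕ} (hj₁ : 1 ≤ j) (hjm : j ≤ m)
    (hk : NthMember k (num j) cs) : k + j ≠ k₀ + (m + 1) := by
  obtain ⟨-, -, -, -, -, -, hup, -⟩ := hold
  intro heq
  have hj := hup j k (k₀ + 1) hj₁ hjm hk (by omega) (by omega)
  rw [show ((k₀ : ℤ) + 1).toNat = k₀ + 1 by omega] at hj
  have := num_injective (hj.unique (hu.cons u))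
  omega

theorem not_down_collision (hold : CorrectUpTo m m cs us ds)
    (hd : NthMember k₀ (num (m + 1)) (Term.cons t ds)) {j k : ℕ} (hj₁ : 1 ≤ j) (hjm : j ≤ m)
    (hk : NthMember k (num j) cs) : k + (m + 1) ≠ k₀ + j := by
  obtain ⟨-, -, -, -, -, -, -, hdown⟩ := hold
  intro heq
  have hj := hdown j k (k₀ - 1) hj₁ hjm hk (by omega) (by have := hk.pos; omega)
  rw [show ((k₀ : ℤ) - 1).toNat = k₀ - 1 by omega] at hj
  have := hj.cons t
  rw [show k₀ - 1 + 1 = k₀ by omega] at this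
  have := num_injective (this.unique hd)
  omega

theorem succ (hold : CorrectUpTo m m cs (Term.cons u us) ds)
    (hc : NthMember k₀ (num (m + 1)) cs) (hu : NthMember k₀ (num (m + 1)) us)
    (hd : NthMember k₀ (num (m + 1)) (Term.cons t ds)) :
    CorrectUpTo (m + 1) (m + 1) cs us (Term.cons t ds) := by
  obtain ⟨-, hL, hD, hmem, hup, hdown, hup_mem, hdown_mem⟩ := id hold
  refine ⟨le_rfl, hL, hD, ?_, ?_, ?_, ?_, ?_⟩
  · intro j hj₁ hj
    rcases Nat.le_add_one_iff.1 hj with hj | rfl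
    · exact hmem j hj₁ hj
    · exact ⟨k₀, hc⟩
  · intro j₁ j₂ k₁ k₂ h₁ hj₁ h₂ hj₂ hk₁ hk₂ heq
    rcases Nat.le_add_one_iff.1 hj₁ with hj₁ | rfl <;>
      rcases Nat.le_add_one_iff.1 hj₂ with hj₂ | rfl
    · exact hup j₁ j₂ k₁ k₂ h₁ hj₁ h₂ hj₂ hk₁ hk₂ (by omega)
    · obtain rfl := hD _ _ _ hk₂ hc
      exact absurd (by omega) (hold.not_up_collision hu h₁ hj₁ hk₁)
    · obtain rfl := hD _ _ _ hk₁ hc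
      exact absurd (by omega) (hold.not_up_collision hu h₂ hj₂ hk₂)
    · rfl
  · intro j₁ j₂ k₁ k₂ h₁ hj₁ h₂ hj₂ hk₁ hk₂ heq
    rcases Nat.le_add_one_iff.1 hj₁ with hj₁ | rfl <;>
      rcases Nat.le_add_one_iff.1 hj₂ with hj₂ | rfl
    · exact hdown j₁ j₂ k₁ k₂ h₁ hj₁ h₂ hj₂ hk₁ hk₂ (by omega)
    · obtain rfl := hD _ _ _ hk₂ hc
      exact absurd (by omega) (hold.not_down_collision hd h₁ hj₁ hk₁)
    · obtain rfl := hD _ _ _ hk₁ hc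
      exact absurd (by omega) (hold.not_down_collision hd h₂ hj₂ hk₂)
    · rfl
  · intro j k l hj₁ hj hk hl hl_pos
    rcases Nat.le_add_one_iff.1 hj with hj | rfl
    · have hj_mem := hup_mem j k (l + 1) hj₁ hj hk (by omega) (by omega)
      rwa [show (l + 1).toNat = l.toNat + 1 by omega, nthMember_cons_iff (by omega)] at hj_mem
    · obtain rfl := hD _ _ _ hk hc
      rwa [show l.toNat = k by omega]
  · intro j k l hj₁ hj hk hl hl_pos
    rcases Nat.le_add_one_iff.1 hj with hj | rfl
    · have hj_mem := (hdown_mem j k (l - 1) hj₁ hj hk (by omega) (by have := hk.pos; omega)).cons t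
      rwa [show (l - 1).toNat + 1 = l.toNat by omega] at hj_mem
    · obtain rfl := hD _ _ _ hk hc
      rwa [show l.toNat = k by omega]

end CorrectUpTo

/-- The condition that `S_pqs` imposes on `pqs(m, cs, us, [_|ds])` for `m > 0`. -/
def PqsSpec (m : ℕ) (cs us ds : Term) : Prop :=
  (∀ j, 1 ≤ j → j ≤ m → IsMember (num j) cs) ∧
    (IsList cs → DistinctMembers cs → CorrectUpTo m m cs us ds)

namespace PqsSpec

variable {m k₀ : ℕ} {cs u us t ds : Term}

theorem zero : PqsSpec 0 cs us ds :=
  ⟨fun _ _ _ => by omega, CorrectUpTo.zero⟩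

theorem succ (h : PqsSpec m cs (Term.cons u us) ds)
    (hc : NthMember k₀ (num (m + 1)) cs) (hu : NthMember k₀ (num (m + 1)) us)
    (hd : NthMember k₀ (num (m + 1)) (Term.cons t ds)) :
    PqsSpec (m + 1) cs us (Term.cons t ds) := by
  refine ⟨fun j hj₁ hj => ?_, fun hL hD => (h.2 hL hD).succ hc hu hd⟩
  rcases Nat.le_add_one_iff.1 hj with hj | rfl
  · exact h.1 j hj₁ hj
  · exact ⟨k₀, hc⟩

end PqsSpec

section Membership

variable {i cs us ds : Term}

theorem pq_mem_Spq_iff : Atom.pq i cs us ds ∈ Spq ↔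
    ∃ k, NthMember k i cs ∧ NthMember k i us ∧ NthMember k i ds := by
  simp only [Spq, Set.mem_ofPred_eq, Atom.pq.injEq]
  constructor
  · rintro ⟨_, _, _, _, k, ⟨rfl, rfl, rfl, rfl⟩, -, h⟩
    exact ⟨k, h⟩
  · rintro ⟨k, h⟩
    exact ⟨_, _, _, _, k, ⟨rfl, rfl, rfl, rfl⟩, h.1.pos, h⟩

theorem pqs_mem_Spqs_iff : Atom.pqs i cs us ds ∈ Spqs ↔
    i = Term.zero ∨ ∃ m t ds', 0 < m ∧ i = num m ∧ ds = Term.cons t ds' ∧ PqsSpec m cs us ds' := by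
  simp only [Spqs, PqsSpec, Set.mem_ofPred_eq, Atom.pqs.injEq]
  constructor
  · rintro (⟨_, _, _, rfl, -⟩ | ⟨m, _, _, t, ds', hm, ⟨rfl, rfl, rfl, rfl⟩, h⟩)
    · exact Or.inl rfl
    · exact Or.inr ⟨m, t, ds', hm, rfl, rfl, h⟩
  · rintro (rfl | ⟨m, t, ds', hm, rfl, rfl, h⟩)
    · exact Or.inl ⟨_, _, _, rfl, rfl, rfl, rfl⟩
    · exact Or.inr ⟨m, _, _, t, ds', hm, ⟨rfl, rfl, rfl, rfl⟩, h⟩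

theorem pq_mem_union_iff : Atom.pq i cs us ds ∈ Spq ∪ Spqs ↔ Atom.pq i cs us ds ∈ Spq :=
  or_iff_left (by simp [Spqs])

theorem pqs_mem_union_iff : Atom.pqs i cs us ds ∈ Spq ∪ Spqs ↔ Atom.pqs i cs us ds ∈ Spqs :=
  or_iff_right (by simp [Spq])

theorem pqs_succ_mem_Spqs {u d : Term} (hpqs : Atom.pqs i cs (Term.cons u us) ds ∈ Spqs)
    (hpq : Atom.pq (Term.succ i) cs us ds ∈ Spq) :
    Atom.pqs (Term.succ i) cs us (Term.cons d ds) ∈ Spqs := by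
  obtain ⟨k₀, hc, hu, hd⟩ := pq_mem_Spq_iff.1 hpq
  obtain ⟨m, t, ds', rfl, rfl, hspec⟩ :
      ∃ m t ds', i = num m ∧ ds = Term.cons t ds' ∧ PqsSpec m cs (Term.cons u us) ds' := by
    rcases pqs_mem_Spqs_iff.1 hpqs with rfl | ⟨m, t, ds', -, rfl, rfl, hspec⟩
    · obtain ⟨t, ds', rfl⟩ := hd.exists_eq_cons
      exact ⟨0, t, ds', rfl, rfl, PqsSpec.zero⟩
    · exact ⟨m, t, ds', rfl, rfl, hspec⟩
  exact pqs_mem_Spqs_iff.2 (Or.inr ⟨m + 1, d, _, m.succ_pos, rfl, rfl, hspec.succ hc hu hd⟩)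

end Membership

theorem isModel_Spq_union_Spqs : IsModel (Spq ∪ Spqs) NQprog := by
  rintro _ (⟨cs, us, ds, rfl⟩ | ⟨i, cs, us, u, d, ds, rfl⟩ | ⟨i, x, y, z, rfl⟩ |
    ⟨i, c, cs, u, us, d, ds, rfl⟩) hbody
  · exact pqs_mem_union_iff.2 (pqs_mem_Spqs_iff.2 (Or.inl rfl))
  · exact pqs_mem_union_iff.2 (pqs_succ_mem_Spqs
      (pqs_mem_union_iff.1 (hbody (Atom.pqs i cs (Term.cons u us) ds) (by simp)))
      (pq_mem_union_iff.1 (hbody (Atom.pq (Term.succ i) cs us ds) (by simp))))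
  · exact pq_mem_union_iff.2 (pq_mem_Spq_iff.2 ⟨1, ⟨x, rfl⟩, ⟨y, rfl⟩, ⟨z, rfl⟩⟩)
  · obtain ⟨k, hc, hu, hd⟩ :=
      pq_mem_Spq_iff.1 (pq_mem_union_iff.1 (hbody (Atom.pq i cs us ds) (by simp)))
    exact pq_mem_union_iff.2 (pq_mem_Spq_iff.2 ⟨k + 1, hc.cons c, hu.cons u, hd.cons d⟩)

/-- Correctness of NQUEENS: its least Herbrand model is contained in the
specification `S = S_pq ∪ S_pqs`. -/
theorem nqueens_correct : LHM NQprog ⊆ Spq ∪ Spqs :=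
  Set.sInter_subset_of_mem isModel_Spq_union_Spqs
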